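/- arXiv:2003.06682 — 3 statements merged into one kernel-verified Lean document; each statement's English description precedes it below -/
import Mathlib

section
/- Let C₁ ⊆ C ⊆ C₂ be convex bodies in ℝ³. Then the set Ext C \ (∂C₁ ∪ ∂C₂ ∪ closure(Sing C)) has no isolated points: for every ξ in this set and every ε > 0, the punctured ball B_ε(ξ) \ {ξ} contains another point of this set. -/
open Set Metric

noncomputable section

/-- The space `ℝ³`. -/
abbrev E3 : Type := EuclideanSpace ℝ (Fin 3)

/-- A convex body in `ℝ³`: a compact convex set with nonempty interior. -/
def IsConvexBody (C : Set E3) : Prop :=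
  IsCompact C ∧ Convex ℝ C ∧ (interior C).Nonempty

/-- `n` is an outward unit normal to the set `C` at the point `ξ`. -/
def IsOutwardNormal (C : Set E3) (ξ n : E3) : Prop :=
  ‖n‖ = 1 ∧ ∀ x ∈ C, (inner ℝ (x - ξ) n : ℝ) ≤ 0

/-- The singular points of the boundary of `C`: boundary points with at least two distinct
outward unit normals. -/
def SingPts (C : Set E3) : Set E3 :=
  {ξ | ξ ∈ frontier C ∧
    ∃ n₁ n₂ : E3, n₁ ≠ n₂ ∧ IsOutwardNormal C ξ n₁ ∧ IsOutwardNormal C ξ n₂}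

/-! An isolated extreme point `ξ` of a convex body `C` is a vertex: if `K` is the closure of the
other extreme points, then `C = conv ({ξ} ∪ K)` by Krein–Milman while `ξ ∉ conv K`, a compact set
by Carathéodory. A hyperplane strictly separating `ξ` from `conv K` supports `C` at `ξ`, and
because the separation is strict its normal can be tilted slightly, giving a second outward
normal, so `ξ ∈ Sing C`. Since `∂C₁ ∪ ∂C₂ ∪ closure (Sing C)` is closed, a point isolated in the
part of `Ext C` outside it is isolated in `Ext C` itself, hence singular: a contradiction. -/

section NormedSpace

variable {E : Type*} [NormedAddCommGroup E] [NormedSpace ℝ E]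

theorem IsCompact.convexHull_of_finiteDimensional [FiniteDimensional ℝ E] {s : Set E}
    (hs : IsCompact s) :
    IsCompact (convexHull ℝ s) := by
  rcases s.eq_empty_or_nonempty with rfl | ⟨y₀, hy₀⟩
  · simp
  let n := Module.finrank ℝ E + 1
  let combination : (Fin n → ℝ) × (Fin n → E) → E := fun p => ∑ i, p.1 i • p.2 i
  suffices h : convexHull ℝ s = combination '' (stdSimplex ℝ (Fin n) ×ˢ univ.pi fun _ => s) by
    rw [h]
    refine ((isCompact_stdSimplex _ _).prod (isCompact_univ_pi fun _ => hs)).image ?_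
    fun_prop
  refine Subset.antisymm ?_ ?_
  · intro x hx
    obtain ⟨ι, _, z, w, hzs, hz, hw₀, hw₁, rfl⟩ := eq_pos_convex_span_of_mem_convexHull hx
    have hcard : Fintype.card ι ≤ Fintype.card (Fin n) := by
      simpa [n] using hz.card_le_finrank_succ.trans (Nat.succ_le_succ (Submodule.finrank_le _))
    obtain ⟨j⟩ := Function.Embedding.nonempty_of_card_le hcard
    refine ⟨(Function.extend j w 0, Function.extend j z fun _ => y₀), ⟨⟨?_, ?_⟩, ?_⟩, ?_⟩
    · intro i
      dsimp only
      rcases Set.range_extend_subset j w 0 (mem_range_self i) with ⟨k, hk⟩ | ⟨_, _, hk⟩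
      · rw [← hk]; exact (hw₀ k).le
      · rw [← hk]; rfl
    · rw [← hw₁]
      refine (Fintype.sum_of_injective j j.injective _ _ (fun i hi => ?_) fun k => ?_).symm
      · exact Function.extend_apply' (f := j) w 0 i (by simpa using hi)
      · exact (j.injective.extend_apply _ _ _).symm
    · intro i _
      dsimp only
      rcases Set.range_extend_subset j z _ (mem_range_self i) with ⟨k, hk⟩ | ⟨_, _, hk⟩
      · rw [← hk]; exact hzs (mem_range_self k)
      · rw [← hk]; exact hy₀
    · refine (Fintype.sum_of_injective j j.injective _ _ (fun i hi => ?_) fun k => ?_).symm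
      · simp [Function.extend_apply' (f := j) w 0 i (by simpa using hi)]
      · simp [j.injective.extend_apply]
  · rintro _ ⟨⟨w, z⟩, ⟨⟨hw₀, hw₁⟩, hz⟩, rfl⟩
    exact (convex_convexHull ℝ s).sum_mem (fun i _ => hw₀ i) hw₁
      fun i _ => subset_convexHull ℝ s (hz i (mem_univ i))

theorem exists_isCompact_extremePoints_subset_insert_of_isolated {C : Set E} (hC : IsCompact C)
    (hCc : Convex ℝ C) {ξ : E} (hξ : ξ ∈ extremePoints ℝ C) {r : ℝ} (hr : 0 < r)
    (hiso : ∀ η ∈ extremePoints ℝ C, η ∈ ball ξ r → η = ξ) :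
    ∃ K : Set E, IsCompact K ∧ ξ ∉ convexHull ℝ K ∧ extremePoints ℝ C ⊆ insert ξ K := by
  set K := closure (extremePoints ℝ C \ ball ξ r)
  have hKC : K ⊆ C := closure_minimal (sdiff_subset.trans extremePoints_subset) hC.isClosed
  have hξK : ξ ∉ K := fun h =>
    closure_minimal (fun _ hy => hy.2) isOpen_ball.isClosed_compl h (mem_ball_self hr)
  refine ⟨K, hC.of_isClosed_subset isClosed_closure hKC, fun h => ?_, fun η hη => ?_⟩
  · have hK : K ⊆ C \ {ξ} := fun y hy => ⟨hKC hy, fun h => hξK (h ▸ hy)⟩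
    exact ((hCc.mem_extremePoints_iff_mem_sdiff_convexHull_sdiff).1 hξ).2 (convexHull_mono hK h)
  · by_cases hb : η ∈ ball ξ r
    · exact .inl (hiso η hη hb)
    · exact .inr (subset_closure ⟨hη, hb⟩)

end NormedSpace

section InnerProductSpace

variable {E : Type*} [NormedAddCommGroup E] [InnerProductSpace ℝ E]

theorem exists_norm_eq_one_inner_eq_zero [FiniteDimensional ℝ E] (hE : 2 ≤ Module.finrank ℝ E)
    (v : E) : ∃ e : E, ‖e‖ = 1 ∧ inner ℝ v e = 0 := by
  have hv : Module.finrank ℝ (ℝ ∙ v) ≤ 1 := by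
    simpa using finrank_span_le_card (R := ℝ) ({v} : Set E)
  have hne : (ℝ ∙ v)ᗮ ≠ ⊥ := by
    rw [Ne, ← Submodule.finrank_eq_zero]
    have := (ℝ ∙ v).finrank_add_finrank_orthogonal
    omega
  obtain ⟨e, he, he0⟩ := Submodule.exists_mem_ne_zero_of_ne_bot hne
  refine ⟨‖e‖⁻¹ • e, norm_smul_inv_norm he0, ?_⟩
  rw [real_inner_smul_right, Submodule.mem_orthogonal_singleton_iff_inner_right.1 he, mul_zero]

theorem exists_inner_sub_le_neg_of_notMem_convexHull [FiniteDimensional ℝ E] [Nontrivial E]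
    {K : Set E} {ξ : E} (hK : IsCompact K) (hξ : ξ ∉ convexHull ℝ K) :
    ∃ v ≠ 0, ∃ m > 0, ∀ y ∈ K, inner ℝ (y - ξ) v ≤ -m := by
  obtain ⟨f, u, hfK, huξ⟩ := geometric_hahn_banach_closed_point (convex_convexHull ℝ K)
    hK.convexHull_of_finiteDimensional.isClosed hξ
  set v := (InnerProductSpace.toDual ℝ E).symm f
  have hsep : ∀ y ∈ K, inner ℝ (y - ξ) v ≤ -(f ξ - u) := fun y hy => by
    rw [real_inner_comm, InnerProductSpace.toDual_symm_apply, map_sub]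
    linarith [hfK y (subset_convexHull ℝ K hy)]
  rcases eq_or_ne v 0 with hv | hv
  -- the separating functional can vanish only when `K = ∅`
  · obtain ⟨v', hv'⟩ := exists_ne (0 : E)
    refine ⟨v', hv', 1, one_pos, fun y hy => ?_⟩
    have := hsep y hy
    rw [hv, inner_zero_right] at this
    linarith
  · exact ⟨v, hv, f ξ - u, by linarith, hsep⟩

theorem inner_smul_inv_norm_nonpos {x w : E} (h : inner ℝ x w ≤ 0) :
    inner ℝ x (‖w‖⁻¹ • w) ≤ 0 := by
  rw [real_inner_smul_right]
  exact mul_nonpos_of_nonneg_of_nonpos (inv_nonneg.2 (norm_nonneg w)) h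

theorem exists_ne_unit_vectors_inner_sub_nonpos [FiniteDimensional ℝ E]
    (hE : 2 ≤ Module.finrank ℝ E) {K : Set E} {ξ v : E} {m : ℝ} (hK : Bornology.IsBounded K)
    (hv : v ≠ 0) (hm : 0 < m) (hvK : ∀ y ∈ K, inner ℝ (y - ξ) v ≤ -m) :
    ∃ n₁ n₂ : E, n₁ ≠ n₂ ∧ ‖n₁‖ = 1 ∧ ‖n₂‖ = 1 ∧
      (∀ y ∈ K, inner ℝ (y - ξ) n₁ ≤ 0) ∧ (∀ y ∈ K, inner ℝ (y - ξ) n₂ ≤ 0) := by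
  obtain ⟨R, hR, hKR⟩ := hK.subset_closedBall_lt 0 ξ
  obtain ⟨e, he, hve⟩ := exists_norm_eq_one_inner_eq_zero hE v
  -- `⟪y - ξ, e⟫ ≤ R` on `K`, so tilting `v` by `(m / R) • e` costs at most the margin `m`
  set w := v + (m / R) • e
  have hwe : inner ℝ w e = m / R := by
    rw [inner_add_left, real_inner_smul_left, real_inner_self_eq_norm_sq, he, hve]
    ring
  have hw : w ≠ 0 := by
    intro h
    rw [h, inner_zero_left] at hwe
    exact (div_pos hm hR).ne hwe
  refine ⟨‖v‖⁻¹ • v, ‖w‖⁻¹ • w, fun h => ?_, norm_smul_inv_norm hv, norm_smul_inv_norm hw,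
    fun y hy => inner_smul_inv_norm_nonpos ((hvK y hy).trans (by linarith)),
    fun y hy => inner_smul_inv_norm_nonpos ?_⟩
  · have := congrArg (fun n => inner ℝ n e) h
    simp only [real_inner_smul_left, hve, hwe, mul_zero] at this
    exact (mul_pos (inv_pos.2 (norm_pos_iff.2 hw)) (div_pos hm hR)).ne this
  · have hyR : ‖y - ξ‖ ≤ R := mem_closedBall_iff_norm.1 (hKR hy)
    calc inner ℝ (y - ξ) w = inner ℝ (y - ξ) v + m / R * inner ℝ (y - ξ) e := by
          rw [inner_add_right, real_inner_smul_right]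
      _ ≤ -m + m / R * R := by
          gcongr
          · exact hvK y hy
          · exact (real_inner_le_norm _ _).trans (by rw [he, mul_one]; exact hyR)
      _ = 0 := by field_simp; ring

theorem inner_sub_nonpos_of_forall_extremePoints {C : Set E} (hC : IsCompact C)
    (hCc : Convex ℝ C) {ξ n : E} (h : ∀ x ∈ extremePoints ℝ C, inner ℝ (x - ξ) n ≤ 0) :
    ∀ x ∈ C, inner ℝ (x - ξ) n ≤ 0 := by
  have hH : {x | inner ℝ (x - ξ) n ≤ 0} = {x | innerSL ℝ n x ≤ innerSL ℝ n ξ} := by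
    ext x
    simp [inner_sub_left, real_inner_comm]
  have hconv : Convex ℝ {x | inner ℝ (x - ξ) n ≤ 0} :=
    hH ▸ convex_halfSpace_le (innerSL ℝ n).toLinearMap.isLinear _
  have hclosed : IsClosed {x | inner ℝ (x - ξ) n ≤ 0} :=
    isClosed_le (by fun_prop) continuous_const
  rw [← closure_convexHull_extremePoints hC hCc]
  exact closure_minimal (convexHull_min h hconv) hclosed

theorem exists_ne_unit_normals_of_isolated_extremePoint [FiniteDimensional ℝ E]
    (hE : 2 ≤ Module.finrank ℝ E) {C : Set E} (hC : IsCompact C) (hCc : Convex ℝ C) {ξ : E}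
    (hξ : ξ ∈ extremePoints ℝ C) {r : ℝ} (hr : 0 < r) (hiso : ∀ η ∈ extremePoints ℝ C, η ∈ ball ξ r → η = ξ) :
    ∃ n₁ n₂ : E, n₁ ≠ n₂ ∧ ‖n₁‖ = 1 ∧ ‖n₂‖ = 1 ∧
      (∀ x ∈ C, inner ℝ (x - ξ) n₁ ≤ 0) ∧ (∀ x ∈ C, inner ℝ (x - ξ) n₂ ≤ 0) := by
  have : Nontrivial E := Module.nontrivial_of_finrank_pos (R := ℝ) (by omega)
  obtain ⟨K, hK, hξK, hExt⟩ :=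
    exists_isCompact_extremePoints_subset_insert_of_isolated hC hCc hξ hr hiso
  obtain ⟨v, hv, m, hm, hvK⟩ := exists_inner_sub_le_neg_of_notMem_convexHull hK hξK
  obtain ⟨n₁, n₂, hne, hn₁, hn₂, hK₁, hK₂⟩ :=
    exists_ne_unit_vectors_inner_sub_nonpos hE hK.isBounded hv hm hvK
  have nonpos_on_C {n : E} (hn : ∀ y ∈ K, inner ℝ (y - ξ) n ≤ 0) : ∀ x ∈ C, inner ℝ (x - ξ) n ≤ 0 :=
    inner_sub_nonpos_of_forall_extremePoints hC hCc fun x hx => by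
      rcases hExt hx with rfl | hxK
      · simp
      · exact hn x hxK
  exact ⟨n₁, n₂, hne, hn₁, hn₂, nonpos_on_C hK₁, nonpos_on_C hK₂⟩

end InnerProductSpace

theorem mem_singPts_of_isolated_extremePoint {C : Set E3} (hC : IsCompact C) (hCc : Convex ℝ C)
    {ξ : E3} (hξ : ξ ∈ extremePoints ℝ C) {r : ℝ} (hr : 0 < r)
    (hiso : ∀ η ∈ extremePoints ℝ C, η ∈ ball ξ r → η = ξ) : ξ ∈ SingPts C := by
  obtain ⟨n₁, n₂, hne, hn₁, hn₂, hC₁, hC₂⟩ :=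
    exists_ne_unit_normals_of_isolated_extremePoint (by simp) hC hCc hξ hr hiso
  have hfrontier : ξ ∈ frontier C := by
    rw [hC.isClosed.frontier_eq]
    exact ⟨extremePoints_subset hξ, fun h => (disjoint_interior_extremePoints C).ne_of_mem h hξ rfl⟩
  exact ⟨hfrontier, n₁, n₂, hne, ⟨hn₁, hC₁⟩, ⟨hn₂, hC₂⟩⟩

theorem stmt5_general (C C₁ C₂ : Set E3)
    (hC : IsConvexBody C)
    (ξ : E3)
    (hξ : ξ ∈ Set.extremePoints ℝ C \ (frontier C₁ ∪ frontier C₂ ∪ closure (SingPts C)))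
    (ε : ℝ) (hε : 0 < ε) :
    ∃ η ∈ Set.extremePoints ℝ C \ (frontier C₁ ∪ frontier C₂ ∪ closure (SingPts C)),
      η ∈ Metric.ball ξ ε ∧ η ≠ ξ := by
  obtain ⟨hξext, hξF⟩ := hξ
  have hF : IsClosed (frontier C₁ ∪ frontier C₂ ∪ closure (SingPts C)) :=
    (isClosed_frontier.union isClosed_frontier).union isClosed_closure
  obtain ⟨δ, hδ, hδF⟩ := Metric.isOpen_iff.1 hF.isOpen_compl ξ hξF
  by_contra! hisolated
  refine hξF (.inr (subset_closure (mem_singPts_of_isolated_extremePoint hC.1 hC.2.1 hξext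
    (lt_min hε hδ) fun η hη hηξ => ?_)))
  exact hisolated η ⟨hη, hδF (ball_subset_ball (min_le_right ε δ) hηξ)⟩
    (ball_subset_ball (min_le_left ε δ) hηξ)

/-- For convex bodies `C₁ ⊆ C ⊆ C₂`, the set
`Ext C \ (∂C₁ ∪ ∂C₂ ∪ closure(Sing C))` has no isolated points. -/
theorem stmt5 (C C₁ C₂ : Set E3)
    (hC : IsConvexBody C) (hC₁ : IsConvexBody C₁) (hC₂ : IsConvexBody C₂)
    (h₁ : C₁ ⊆ C) (h₂ : C ⊆ C₂)
    (ξ : E3)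
    (hξ : ξ ∈ Set.extremePoints ℝ C \ (frontier C₁ ∪ frontier C₂ ∪ closure (SingPts C)))
    (ε : ℝ) (hε : 0 < ε) :
    ∃ η ∈ Set.extremePoints ℝ C \ (frontier C₁ ∪ frontier C₂ ∪ closure (SingPts C)),
      η ∈ Metric.ball ξ ε ∧ η ≠ ξ :=
  stmt5_general C C₁ C₂ hC ξ hξ ε hε
end
end

section
/- Let C ⊂ ℝ³ be a convex body and let {O₁, O₂, …} be a finite or countable set of points lying outside C such that for all i ≠ j the open segment (O_i, O_j) intersects C, and assume additionally that for every i and every ξ ∈ Sing C the open segment (O_i, ξ) intersects C. Let C̃ = Conv(C ∪ {O₁, O₂, …}). Then Sing C ∪ {O₁, O₂, …} ⊆ Sing C̃. -/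
open Set Metric RealInnerProductSpace

noncomputable section

/-!
A normal of `C` at `ξ ∈ Sing C` stays a normal of `C̃`: the segment from `ξ` to `O_j` enters `C`,
so `O_j` lies in the same half-space. At `O_i ∉ C`, the compact convex set `C` lies in a closed
cone `⟪y - O_i, m⟫ + c‖y - O_i‖ ≤ 0` of positive aperture `c`, whose axis points from `O_i` to
the nearest point of `C`; every `O_j` lies in that cone too, because `(O_i, O_j)` meets `C`.
So the normal cone of `C̃` at `O_i` has interior points, hence (in dimension at least two)
contains two distinct unit vectors.
-/

section InnerProductSpace

variable {F : Type*} [NormedAddCommGroup F] [InnerProductSpace ℝ F]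

lemma exists_ne_zero_inner_eq_zero [FiniteDimensional ℝ F] (h : 1 < Module.finrank ℝ F)
    (m : F) : ∃ u : F, u ≠ 0 ∧ ⟪m, u⟫ = 0 := by
  have hspan : Module.finrank ℝ (ℝ ∙ m) ≤ 1 :=
    (finrank_span_le_card ({m} : Set F)).trans (by simp)
  have hperp : (ℝ ∙ m)ᗮ ≠ ⊥ := by
    intro hbot
    have := (ℝ ∙ m).finrank_add_finrank_orthogonal
    rw [hbot, finrank_bot] at this
    omega
  obtain ⟨u, hu, hu0⟩ := Submodule.exists_mem_ne_zero_of_ne_bot hperp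
  exact ⟨u, hu0, Submodule.mem_orthogonal_singleton_iff_inner_right.1 hu⟩

lemma forall_mem_convexHull_inner_sub_nonpos {s : Set F} {p m : F}
    (h : ∀ y ∈ s, ⟪y - p, m⟫ ≤ 0) : ∀ y ∈ convexHull ℝ s, ⟪y - p, m⟫ ≤ 0 := by
  have hhalf : Convex ℝ {y : F | ⟪y, m⟫ ≤ ⟪p, m⟫} :=
    convex_halfSpace_le ⟨fun x y => inner_add_left x y m, fun c x => real_inner_smul_left x m c⟩ _
  intro y hy
  have := convexHull_min (fun y hy => by simpa [inner_sub_left] using h y hy) hhalf hy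
  simpa [inner_sub_left] using this

lemma inner_sub_add_mul_norm_nonpos_of_mem_openSegment {p x y m : F} {c : ℝ}
    (hx : x ∈ openSegment ℝ p y) (h : ⟪x - p, m⟫ + c * ‖x - p‖ ≤ 0) :
    ⟪y - p, m⟫ + c * ‖y - p‖ ≤ 0 := by
  rw [openSegment_eq_image'] at hx
  obtain ⟨θ, ⟨hθ, -⟩, rfl⟩ := hx
  rw [add_sub_cancel_left, real_inner_smul_left, norm_smul, Real.norm_of_nonneg hθ.le,
    mul_left_comm, ← mul_add] at h
  exact nonpos_of_mul_nonpos_right h hθ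

lemma forall_mem_union_inner_sub_add_mul_norm_nonpos {C T : Set F} {p m : F} {c : ℝ}
    (hC : ∀ y ∈ C, ⟪y - p, m⟫ + c * ‖y - p‖ ≤ 0)
    (hT : ∀ q ∈ T, q ≠ p → (openSegment ℝ p q ∩ C).Nonempty) :
    ∀ y ∈ C ∪ T, ⟪y - p, m⟫ + c * ‖y - p‖ ≤ 0 := by
  rintro y (hy | hy)
  · exact hC y hy
  · by_cases hyp : y = p
    · simp [hyp]
    · obtain ⟨x, hxseg, hxC⟩ := hT y hy hyp
      exact inner_sub_add_mul_norm_nonpos_of_mem_openSegment hxseg (hC x hxC)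

/-- A compact convex set is seen from a point outside it within a closed cone of positive
aperture: take for `-m` the direction towards the nearest point. -/
lemma exists_forall_inner_sub_add_mul_norm_nonpos {C : Set F} (hC : IsCompact C)
    (hconv : Convex ℝ C) {p : F} (hp : p ∉ C) :
    ∃ m : F, ∃ c > 0, ∀ y ∈ C, ⟪y - p, m⟫ + c * ‖y - p‖ ≤ 0 := by
  rcases C.eq_empty_or_nonempty with rfl | hne
  · exact ⟨0, 1, one_pos, by simp⟩
  obtain ⟨v, hvC, hv⟩ := exists_norm_eq_iInf_of_complete_convex hne hC.isComplete hconv p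
  have hproj := (norm_eq_iInf_iff_real_inner_le_zero hconv hvC).1 hv
  have hd : 0 < ‖p - v‖ := norm_pos_iff.2 (sub_ne_zero.2 fun h => hp (h ▸ hvC))
  obtain ⟨r, hr⟩ := hC.isBounded.subset_closedBall p
  set D := max r 1
  have hD : 0 < D := lt_max_of_lt_right one_pos
  refine ⟨p - v, ‖p - v‖ ^ 2 / D, by positivity, fun y hy => ?_⟩
  have hyD : ‖y - p‖ ≤ D := (mem_closedBall_iff_norm.1 (hr hy)).trans (le_max_left r 1)
  have hinner : ⟪y - p, p - v⟫ = ⟪p - v, y - v⟫ - ‖p - v‖ ^ 2 := by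
    rw [show y - p = (y - v) - (p - v) by abel, inner_sub_left, real_inner_comm,
      real_inner_self_eq_norm_sq]
  have hcD : ‖p - v‖ ^ 2 / D * ‖y - p‖ ≤ ‖p - v‖ ^ 2 := by
    rw [div_mul_eq_mul_div, div_le_iff₀ hD]
    exact mul_le_mul_of_nonneg_left hyD (by positivity)
  linarith [hproj y hy]

end InnerProductSpace

lemma isOutwardNormal_norm_inv_smul {s : Set E3} {ξ m : E3} (hm : m ≠ 0)
    (h : ∀ x ∈ s, ⟪x - ξ, m⟫ ≤ 0) : IsOutwardNormal s ξ (‖m‖⁻¹ • m) :=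
  ⟨norm_smul_inv_norm hm, fun x hx => by
    rw [real_inner_smul_right]
    exact mul_nonpos_of_nonneg_of_nonpos (by positivity) (h x hx)⟩

lemma IsOutwardNormal.convexHull {s : Set E3} {ξ n : E3} (hn : IsOutwardNormal s ξ n) :
    IsOutwardNormal (convexHull ℝ s) ξ n :=
  ⟨hn.1, forall_mem_convexHull_inner_sub_nonpos hn.2⟩

lemma IsOutwardNormal.union {C T : Set E3} {ξ n : E3} (hn : IsOutwardNormal C ξ n)
    (hT : ∀ q ∈ T, q ≠ ξ → (openSegment ℝ ξ q ∩ C).Nonempty) :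
    IsOutwardNormal (C ∪ T) ξ n :=
  ⟨hn.1, fun y hy => by
    simpa using forall_mem_union_inner_sub_add_mul_norm_nonpos (c := 0) (by simpa using hn.2)
      hT y hy⟩

lemma IsOutwardNormal.notMem_interior {s : Set E3} {ξ n : E3} (hn : IsOutwardNormal s ξ n) :
    ξ ∉ interior s := by
  intro h
  obtain ⟨ε, hε, hball⟩ := Metric.mem_nhds_iff.1 (mem_interior_iff_mem_nhds.1 h)
  have hmem : ξ + (ε / 2) • n ∈ s := hball <| by
    rw [mem_ball_iff_norm, add_sub_cancel_left, norm_smul, hn.1,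
      Real.norm_of_nonneg (by positivity)]
    linarith
  have := hn.2 _ hmem
  rw [add_sub_cancel_left, real_inner_smul_left, real_inner_self_eq_norm_sq, hn.1] at this
  linarith

lemma mem_singPts_of_isOutwardNormal {s : Set E3} {ξ n₁ n₂ : E3} (hξ : ξ ∈ closure s)
    (h₁ : IsOutwardNormal s ξ n₁) (h₂ : IsOutwardNormal s ξ n₂) (hne : n₁ ≠ n₂) :
    ξ ∈ SingPts s :=
  ⟨⟨hξ, h₁.notMem_interior⟩, n₁, n₂, hne, h₁, h₂⟩

/-- A normal cone with nonempty interior contains two distinct unit normals: `m ± w`, for a small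
`w ⊥ m`, normalised by the same factor `‖m + w‖ = ‖m - w‖`. -/
lemma exists_ne_isOutwardNormal {s : Set E3} {p m : E3} {c : ℝ} (hc : 0 < c)
    (h : ∀ y ∈ s, ⟪y - p, m⟫ + c * ‖y - p‖ ≤ 0) :
    ∃ n₁ n₂ : E3, n₁ ≠ n₂ ∧ IsOutwardNormal s p n₁ ∧ IsOutwardNormal s p n₂ := by
  obtain ⟨u, hu0, hmu⟩ := exists_ne_zero_inner_eq_zero (by simp) m
  set w := (c * ‖u‖⁻¹) • u
  have hw0 : w ≠ 0 := smul_ne_zero (by positivity) hu0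
  have hw : ‖w‖ = c := by
    rw [norm_smul, Real.norm_of_nonneg (by positivity), mul_assoc,
      inv_mul_cancel₀ (norm_ne_zero_iff.2 hu0), mul_one]
  have hmw : ⟪m, w⟫ = 0 := by rw [real_inner_smul_right, hmu, mul_zero]
  have hnormal : ∀ v : E3, ‖v‖ = c → ∀ y ∈ s, ⟪y - p, m + v⟫ ≤ 0 := fun v hv y hy => by
    have hcs := real_inner_le_norm (y - p) v
    rw [hv, mul_comm] at hcs
    rw [inner_add_right]
    linarith [h y hy]
  have hpos : m + w ≠ 0 := fun h0 => hw0 <| by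
    have := norm_add_sq_eq_norm_sq_add_norm_sq_real hmw
    rw [h0, norm_zero, hw] at this
    nlinarith
  have hnorm : ‖m - w‖ = ‖m + w‖ := norm_sub_eq_norm_add (real_inner_comm m w ▸ hmw)
  have hneg : m - w ≠ 0 := norm_ne_zero_iff.1 (hnorm ▸ norm_ne_zero_iff.2 hpos)
  refine ⟨_, _, ?_, isOutwardNormal_norm_inv_smul hpos (hnormal w hw),
    isOutwardNormal_norm_inv_smul hneg (by simpa [sub_eq_add_neg] using hnormal (-w) (by simpa))⟩
  rw [hnorm, Ne, smul_right_inj (inv_ne_zero (norm_ne_zero_iff.2 hpos))]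
  intro heq
  have h2w : (2 : ℝ) • w = 0 := by linear_combination (norm := module) heq
  exact hw0 ((smul_eq_zero.1 h2w).resolve_left two_ne_zero)

theorem stmt9_general {ι : Type}
    (C : Set E3) (hC : IsConvexBody C)
    (O : ι → E3) (hO : ∀ i, O i ∉ C)
    (hseg : ∀ i j, i ≠ j → (openSegment ℝ (O i) (O j) ∩ C).Nonempty)
    (hsing : ∀ i, ∀ ξ ∈ SingPts C, (openSegment ℝ (O i) ξ ∩ C).Nonempty) :
    SingPts C ∪ Set.range O ⊆ SingPts (convexHull ℝ (C ∪ Set.range O)) := by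
  obtain ⟨hcompact, hconv, -⟩ := hC
  rintro ξ (hξ | ⟨i, rfl⟩)
  · have hξC : ξ ∈ C := hcompact.isClosed.frontier_subset hξ.1
    have hextend : ∀ n, IsOutwardNormal C ξ n →
        IsOutwardNormal (convexHull ℝ (C ∪ range O)) ξ n := fun n hn =>
      (hn.union (T := range O) fun _ ⟨j, hj⟩ _ => by
        rw [← hj, openSegment_symm]
        exact hsing j ξ hξ).convexHull
    obtain ⟨-, n₁, n₂, hne, h₁, h₂⟩ := hξ
    exact mem_singPts_of_isOutwardNormal (subset_closure (subset_convexHull ℝ _ (.inl hξC)))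
      (hextend n₁ h₁) (hextend n₂ h₂) hne
  · obtain ⟨m, c, hc, hcone⟩ := exists_forall_inner_sub_add_mul_norm_nonpos hcompact hconv (hO i)
    have hcone' := forall_mem_union_inner_sub_add_mul_norm_nonpos (T := range O) hcone
      fun _ ⟨j, hj⟩ hji => by
        subst hj
        exact hseg i j fun hij => hji (hij ▸ rfl)
    obtain ⟨n₁, n₂, hne, h₁, h₂⟩ := exists_ne_isOutwardNormal hc hcone'
    exact mem_singPts_of_isOutwardNormal (subset_closure (subset_convexHull ℝ _ (.inr ⟨i, rfl⟩)))
      h₁.convexHull h₂.convexHull hne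

/-- If `{O_i}` is a finite or countable set of points outside the convex body `C` such that
each open segment `(O_i, O_j)` (for `i ≠ j`) meets `C`, and moreover each open segment
`(O_i, ξ)` with `ξ ∈ Sing C` meets `C`, then for `C̃ = Conv(C ∪ {O₁, O₂, …})` one has
`Sing C ∪ {O₁, O₂, …} ⊆ Sing C̃`. -/
theorem stmt9 {ι : Type} [Countable ι]
    (C : Set E3) (hC : IsConvexBody C)
    (O : ι → E3) (hO : ∀ i, O i ∉ C)
    (hseg : ∀ i j, i ≠ j → (openSegment ℝ (O i) (O j) ∩ C).Nonempty)
    (hsing : ∀ i, ∀ ξ ∈ SingPts C, (openSegment ℝ (O i) ξ ∩ C).Nonempty) :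
    SingPts C ∪ Set.range O ⊆ SingPts (convexHull ℝ (C ∪ Set.range O)) :=
  stmt9_general C hC O hO hseg hsing
end
end

section
/- Let C ⊂ ℝ³ be a convex body, let ξ ∈ Ext C \ closure(Sing C), and let A ⊆ C be a closed set with ξ ∉ A. Then for every ε > 0 there exists a point O ∉ C such that dist(ξ, O) < ε and for every x ∈ A the open segment (O, x) intersects the interior of C. -/
/-!
Since `ξ` is extreme, a hyperplane cuts off from `C` a cap inside an arbitrarily small ball around
`ξ`. A point `p` of that cap maximizing the cutting functional is a regular boundary point, with
unique outward normal `u`, whose supporting hyperplane meets `C` only inside the ball, hence misses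
`A`. If a supporting hyperplane at `a ∈ A` passed through `p` it would support `C` at `p`, so its
normal would be `u`; by compactness of the set of pairs (point of `A`, outward normal there), `p`
therefore lies a uniform distance `η` inside every supporting half-space at points of `A`. So does
`O = p + τ u` for `0 < τ < η`, which is outside `C`; and if `(O, x)` missed the interior of `C`, a
hyperplane separating them would be a supporting hyperplane at `x` with `O` on its outer side.
-/
open Set Metric

noncomputable section

section ConvexHull

variable {E : Type*} [AddCommGroup E] [Module ℝ E] {s t : Set E}

/-- `iterConvexJoin s k` is the set of convex combinations of `k + 1` points of `s`. -/
def iterConvexJoin (s : Set E) : ℕ → Set E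
  | 0 => s
  | k + 1 => convexJoin ℝ s (iterConvexJoin s k)

theorem iterConvexJoin_subset_convexHull (s : Set E) (k : ℕ) :
    iterConvexJoin s k ⊆ convexHull ℝ s := by
  induction k with
  | zero => exact subset_convexHull ℝ s
  | succ k ih => exact convexJoin_subset (subset_convexHull ℝ s) ih (convex_convexHull ℝ s)

theorem convexHull_subset_iterConvexJoin {u : Finset E} (hu : u.Nonempty) (hus : ↑u ⊆ s) :
    convexHull ℝ ↑u ⊆ iterConvexJoin s (u.card - 1) := by
  induction hu using Finset.Nonempty.cons_induction with
  | singleton a => simpa [iterConvexJoin] using hus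
  | cons a u ha hu ih =>
    rw [Finset.coe_cons] at hus ⊢
    rw [Finset.card_cons, Nat.add_sub_cancel, convexHull_insert (Finset.coe_nonempty.2 hu),
      ← Nat.sub_add_cancel hu.card_pos, iterConvexJoin]
    exact convexJoin_mono (by simpa using hus (mem_insert a _))
      (ih (fun x hx => hus (mem_insert_of_mem a hx)))

variable [TopologicalSpace E] [IsTopologicalAddGroup E] [ContinuousSMul ℝ E]

theorem isCompact_convexJoin (hs : IsCompact s) (ht : IsCompact t) :
    IsCompact (convexJoin ℝ s t) := by
  have : convexJoin ℝ s t =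
      (fun q : E × E × ℝ => q.1 + q.2.2 • (q.2.1 - q.1)) '' s ×ˢ t ×ˢ Icc 0 1 := by
    ext x
    simp only [mem_convexJoin, segment_eq_image', mem_image, mem_prod, mem_Icc]
    aesop
  rw [this]
  exact (hs.prod (ht.prod isCompact_Icc)).image (by fun_prop)

theorem isCompact_iterConvexJoin (hs : IsCompact s) (k : ℕ) : IsCompact (iterConvexJoin s k) := by
  induction k with
  | zero => exact hs
  | succ k ih => exact isCompact_convexJoin hs ih

end ConvexHull

theorem isCompact_convexHull {E : Type*} [NormedAddCommGroup E] [NormedSpace ℝ E]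
    [FiniteDimensional ℝ E] {s : Set E} (hs : IsCompact s) : IsCompact (convexHull ℝ s) := by
  have : convexHull ℝ s = ⋃ k ∈ Finset.range (Module.finrank ℝ E + 1), iterConvexJoin s k := by
    refine (Subset.antisymm ?_ (iUnion₂_subset fun k _ => iterConvexJoin_subset_convexHull s k))
    rw [convexHull_eq_union]
    simp only [iUnion_subset_iff]
    intro u hus hu x hx
    have hcard : u.card ≤ Module.finrank ℝ E + 1 := by
      simpa using hu.card_le_finrank_succ.trans (Nat.succ_le_succ (Submodule.finrank_le _))
    have hne : u.Nonempty := Finset.coe_nonempty.1 (convexHull_nonempty_iff.1 ⟨x, hx⟩)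
    exact mem_biUnion (Finset.mem_range.2 (by omega)) (convexHull_subset_iterConvexJoin hne hus hx)
  rw [this]
  exact (Finset.range _).isCompact_biUnion fun k _ => isCompact_iterConvexJoin hs k

section Slice

variable {E : Type*} [NormedAddCommGroup E] [InnerProductSpace ℝ E] [FiniteDimensional ℝ E]

/-- By extremality `ξ` lies outside the convex hull of the far part of `C`, which is compact,
so a hyperplane separates them. -/
theorem exists_inner_lt_of_mem_extremePoints [Nontrivial E] {C : Set E} (hCc : IsCompact C)
    (hCv : Convex ℝ C) {ξ : E} (hξ : ξ ∈ extremePoints ℝ C) {ρ : ℝ} (hρ : 0 < ρ) :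
    ∃ v ≠ 0, ∀ x ∈ C, ρ ≤ dist x ξ → inner ℝ v x < inner ℝ v ξ := by
  set S := {x ∈ C | ρ ≤ dist x ξ}
  have hS : IsCompact S :=
    hCc.inter_right (isClosed_le continuous_const (continuous_id.dist continuous_const))
  have hξS : ξ ∉ convexHull ℝ S := fun h => by
    have hext : ξ ∈ extremePoints ℝ (convexHull ℝ S) :=
      inter_extremePoints_subset_extremePoints_of_subset (convexHull_min (sep_subset _ _) hCv)
        ⟨h, hξ⟩
    simpa [S, dist_self, not_le.2 hρ] using extremePoints_convexHull_subset hext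
  rcases S.eq_empty_or_nonempty with hS₀ | ⟨s, hs⟩
  · obtain ⟨v, hv⟩ := exists_ne (0 : E)
    exact ⟨v, hv, fun x hx hxρ => (hS₀.subset ⟨hx, hxρ⟩).elim⟩
  obtain ⟨f, c, hf, hfξ⟩ := geometric_hahn_banach_closed_point (convex_convexHull ℝ S)
    (isCompact_convexHull hS).isClosed hξS
  have hf' : ∀ x ∈ S, f x < f ξ := fun x hx => (hf x (subset_convexHull ℝ S hx)).trans hfξ
  refine ⟨(InnerProductSpace.toDual ℝ E).symm f, fun h => ?_, fun x hx hxρ => ?_⟩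
  · have hf0 : f = 0 := by simpa using h
    exact (hf' s hs).ne (by simp [hf0])
  · simpa [InnerProductSpace.toDual_symm_apply] using hf' x ⟨hx, hxρ⟩

end Slice

theorem inner_sub_inv_norm_smul {E : Type*} [NormedAddCommGroup E] [InnerProductSpace ℝ E]
    (v x y : E) : inner ℝ (x - y) (‖v‖⁻¹ • v) = ‖v‖⁻¹ * (inner ℝ v x - inner ℝ v y) := by
  rw [real_inner_smul_right, real_inner_comm, inner_sub_right]

theorem isOutwardNormal_inv_norm_smul {C : Set E3} {ξ v : E3} (hv : v ≠ 0)
    (h : ∀ x ∈ C, inner ℝ v x ≤ inner ℝ v ξ) : IsOutwardNormal C ξ (‖v‖⁻¹ • v) := by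
  refine ⟨norm_smul_inv_norm hv, fun x hx => ?_⟩
  rw [inner_sub_inv_norm_smul]
  exact mul_nonpos_of_nonneg_of_nonpos (by positivity) (sub_nonpos.2 (h x hx))

namespace IsOutwardNormal

variable {C : Set E3} {ξ n : E3}

theorem add_smul_notMem (h : IsOutwardNormal C ξ n) {t : ℝ} (ht : 0 < t) : ξ + t • n ∉ C := by
  intro hC
  have := h.2 _ hC
  rw [add_sub_cancel_left, real_inner_smul_left, real_inner_self_eq_norm_sq, h.1] at this
  linarith

theorem mem_frontier (h : IsOutwardNormal C ξ n) (hξ : ξ ∈ C) : ξ ∈ frontier C := by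
  refine ⟨subset_closure hξ, fun hint => ?_⟩
  obtain ⟨δ, hδ, hball⟩ := Metric.mem_nhds_iff.1 (mem_interior_iff_mem_nhds.1 hint)
  refine h.add_smul_notMem (half_pos hδ) (hball ?_)
  rw [mem_ball, dist_self_add_left, norm_smul, h.1, mul_one, Real.norm_of_nonneg (by positivity)]
  exact half_lt_self hδ

theorem of_inner_sub_eq_zero (h : IsOutwardNormal C ξ n) {p : E3} (hp : inner ℝ (p - ξ) n = 0) :
    IsOutwardNormal C p n := by
  refine ⟨h.1, fun x hx => ?_⟩
  rw [← sub_sub_sub_cancel_right x p ξ, inner_sub_left, hp, sub_zero]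
  exact h.2 x hx

end IsOutwardNormal

theorem isCompact_setOf_isOutwardNormal (C : Set E3) {A : Set E3} (hA : IsCompact A) :
    IsCompact {q : E3 × E3 | q.1 ∈ A ∧ IsOutwardNormal C q.1 q.2} := by
  have : {q : E3 × E3 | q.1 ∈ A ∧ IsOutwardNormal C q.1 q.2} =
      A ×ˢ sphere 0 1 ∩ ⋂ y ∈ C, {q | inner ℝ (y - q.1) q.2 ≤ (0 : ℝ)} := by
    ext q
    simp [IsOutwardNormal, and_assoc]
  rw [this]
  exact (hA.prod (isCompact_sphere 0 1)).inter_right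
    (isClosed_biInter fun y _ => isClosed_le (by fun_prop) continuous_const)

theorem exists_isOutwardNormal_near_mem_extremePoints {C : Set E3} (hCc : IsCompact C)
    (hCv : Convex ℝ C) {ξ : E3} (hξ : ξ ∈ extremePoints ℝ C) {ρ : ℝ} (hρ : 0 < ρ) :
    ∃ p ∈ C, ∃ u, IsOutwardNormal C p u ∧ dist p ξ < ρ ∧
      ∀ x ∈ C, ρ ≤ dist x ξ → inner ℝ (x - p) u < 0 := by
  obtain ⟨v, hv, hvξ⟩ := exists_inner_lt_of_mem_extremePoints hCc hCv hξ hρ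
  obtain ⟨p, hpC, hpmax⟩ := hCc.exists_isMaxOn ⟨ξ, hξ.1⟩
    (by fun_prop : Continuous fun x : E3 => inner ℝ v x).continuousOn
  have hfar : ∀ x ∈ C, ρ ≤ dist x ξ → inner ℝ v x < inner ℝ v p :=
    fun x hx hxρ => (hvξ x hx hxρ).trans_le (hpmax hξ.1)
  refine ⟨p, hpC, ‖v‖⁻¹ • v, isOutwardNormal_inv_norm_smul hv fun x hx => hpmax hx,
    not_le.1 fun hpρ => (hfar p hpC hpρ).false, fun x hx hxρ => ?_⟩
  rw [inner_sub_inv_norm_smul]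
  exact mul_neg_of_pos_of_neg (by positivity) (sub_neg.2 (hfar x hx hxρ))

/-- A supporting hyperplane at `a ∈ A` through `p` would support `C` at `p` too, so by regularity
of `p` its normal would be `u`, putting `a` on the hyperplane `⟪· - p, u⟫ = 0`. -/
theorem exists_pos_forall_isOutwardNormal_inner_le {C A : Set E3} (hA : IsCompact A)
    {p u : E3} (hp : p ∈ C) (hu : IsOutwardNormal C p u) (hps : p ∉ SingPts C)
    (hAu : ∀ a ∈ A, inner ℝ (a - p) u < 0) :
    ∃ η > 0, ∀ a ∈ A, ∀ n, IsOutwardNormal C a n → inner ℝ (p - a) n ≤ -η := by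
  have hneg : ∀ q ∈ {q : E3 × E3 | q.1 ∈ A ∧ IsOutwardNormal C q.1 q.2},
      0 < -inner ℝ (p - q.1) q.2 := by
    rintro ⟨a, n⟩ ⟨ha, hn⟩
    refine neg_pos.2 ((hn.2 p hp).lt_of_ne fun h0 => ?_)
    have hnu : n = u := by
      by_contra hne
      exact hps ⟨hu.mem_frontier hp, n, u, hne, hn.of_inner_sub_eq_zero h0, hu⟩
    have := hAu a ha
    rw [← neg_sub, inner_neg_left, ← hnu, h0, neg_zero] at this
    exact this.false
  obtain ⟨η, hη, hηle⟩ := (isCompact_setOf_isOutwardNormal C hA).exists_forall_le'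
    (by fun_prop) hneg
  exact ⟨η, hη, fun a ha n hn => le_neg.1 (hηle (a, n) ⟨ha, hn⟩)⟩

/-- Otherwise a hyperplane separating `(O, x)` from `interior C` would support `C` at `x`, with
`O` on its outer side. -/
theorem openSegment_inter_interior_nonempty {C : Set E3} (hCv : Convex ℝ C)
    (hCi : (interior C).Nonempty) {O x : E3} (hx : x ∈ C)
    (hO : ∀ m, IsOutwardNormal C x m → inner ℝ (O - x) m < 0) :
    (openSegment ℝ O x ∩ interior C).Nonempty := by
  by_contra hempty
  obtain ⟨f, c, hfC, hfOx⟩ := geometric_hahn_banach_open hCv.interior isOpen_interior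
    (convex_openSegment O x) (disjoint_iff_inter_eq_empty.2 (by
      rw [inter_comm]; exact not_nonempty_iff_eq_empty.1 hempty))
  have hfC' : ∀ y ∈ C, f y ≤ c := by
    refine fun y hy => closure_minimal (fun z hz => (hfC z hz).le)
      (isClosed_le f.continuous continuous_const) ?_
    rw [hCv.closure_interior_eq_closure_of_nonempty_interior hCi]
    exact subset_closure hy
  have hfseg : ∀ y ∈ segment ℝ O x, c ≤ f y := by
    rw [← closure_openSegment]
    exact closure_minimal hfOx (isClosed_le continuous_const f.continuous)
  have hfx : f x = c := (hfC' x hx).antisymm (hfseg x (right_mem_segment ℝ O x))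
  set v := (InnerProductSpace.toDual ℝ E3).symm f
  have hv : ∀ y, inner ℝ v y = f y := fun y => InnerProductSpace.toDual_symm_apply
  have hv0 : v ≠ 0 := by
    intro h
    obtain ⟨a, ha⟩ := hCi
    have := hfC a ha
    simp only [← hfx, ← hv, h, inner_zero_left, lt_self_iff_false] at this
  have hm := hO _ (isOutwardNormal_inv_norm_smul hv0 fun y hy => by
    rw [hv, hv, hfx]; exact hfC' y hy)
  rw [inner_sub_inv_norm_smul, hv, hv, hfx] at hm
  exact not_le.2 hm
    (mul_nonneg (inv_nonneg.2 (norm_nonneg v)) (sub_nonneg.2 (hfseg O (left_mem_segment ℝ O x))))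

/-- Given `ξ ∈ Ext C \ closure(Sing C)` and a closed set `A ⊆ C` not containing `ξ`, for every
`ε > 0` there is a point `O ∉ C` with `dist ξ O < ε` such that for every `x ∈ A` the open
segment `(O, x)` meets the interior of `C`. -/
theorem stmt10 (C : Set E3) (hC : IsConvexBody C)
    (ξ : E3) (hξ : ξ ∈ Set.extremePoints ℝ C \ closure (SingPts C))
    (A : Set E3) (hAclosed : IsClosed A) (hAC : A ⊆ C) (hξA : ξ ∉ A)
    (ε : ℝ) (hε : 0 < ε) :
    ∃ O : E3, O ∉ C ∧ dist ξ O < ε ∧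
      ∀ x ∈ A, (openSegment ℝ O x ∩ interior C).Nonempty := by
  obtain ⟨hCc, hCv, hCi⟩ := hC
  obtain ⟨r, hr, hball⟩ := Metric.isOpen_iff.1 (hAclosed.union isClosed_closure).isOpen_compl ξ
    (not_or.2 ⟨hξA, hξ.2⟩)
  set ρ := min r (ε / 2)
  have hρ : 0 < ρ := lt_min hr (half_pos hε)
  have hfar : ∀ y, dist y ξ < ρ → y ∉ A ∧ y ∉ closure (SingPts C) := fun y hy => by
    simpa [not_or] using hball (mem_ball.2 (hy.trans_le (min_le_left _ _)))
  obtain ⟨p, hpC, u, hu, hpξ, hface⟩ :=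
    exists_isOutwardNormal_near_mem_extremePoints hCc hCv hξ.1 hρ
  obtain ⟨η, hη, hηA⟩ := exists_pos_forall_isOutwardNormal_inner_le
    (hCc.of_isClosed_subset hAclosed hAC) hpC hu
    (fun hs => (hfar p hpξ).2 (subset_closure hs))
    (fun a ha => hface a (hAC ha) (not_lt.1 fun h => (hfar a h).1 ha))
  set τ := min (η / 2) (ε / 2)
  have hτ : 0 < τ := lt_min (half_pos hη) (half_pos hε)
  refine ⟨p + τ • u, hu.add_smul_notMem hτ, ?_, fun x hx =>
    openSegment_inter_interior_nonempty hCv hCi (hAC hx) fun m hm => ?_⟩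
  · have hpO : dist p (p + τ • u) = τ := by
      rw [dist_self_add_right, norm_smul, hu.1, mul_one, Real.norm_of_nonneg hτ.le]
    linarith [dist_triangle ξ p (p + τ • u), dist_comm ξ p, min_le_right r (ε / 2),
      min_le_right (η / 2) (ε / 2)]
  · have hum : inner ℝ u m ≤ (1 : ℝ) := by
      simpa [hu.1, hm.1] using real_inner_le_norm u m
    calc inner ℝ (p + τ • u - x) m = inner ℝ (p - x) m + τ * inner ℝ u m := by
          rw [add_sub_right_comm, inner_add_left, real_inner_smul_left]
      _ ≤ -η + τ * 1 := add_le_add (hηA x hx m hm) (mul_le_mul_of_nonneg_left hum hτ.le)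
      _ < 0 := by linarith [min_le_left (η / 2) (ε / 2)]
end
end
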